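/- Let p > q ≥ 2 be integers and let r, s be integers with r·p + s·q = 1, |r| < q, and 1 < s < p. For each natural number n set g_n = (u^s·v^r)·((u^s·v^r)^q·u^{−1})^n in H. Then for all natural numbers m ≠ n, the elements g_m and g_n are not conjugate in H. -/

import Mathlib

/-- The relators `u^p` and `v^q` presenting the free product `ℤ/p ∗ ℤ/q`, in the free
group on two generators (`FreeGroup.of 0 = u`, `FreeGroup.of 1 = v`). -/
def freeProdRels (p q : ℤ) : Set (FreeGroup (Fin 2)) :=
  {FreeGroup.of 0 ^ p, FreeGroup.of 1 ^ q}

/-- The group `H = ⟨u, v ∣ u^p = 1, v^q = 1⟩ ≅ ℤ/p ∗ ℤ/q`. -/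
abbrev FreeProdGroup (p q : ℤ) := PresentedGroup (freeProdRels p q)

/-- The generator `u`. -/
def u (p q : ℤ) : FreeProdGroup p q := PresentedGroup.of 0

/-- The generator `v`. -/
def v (p q : ℤ) : FreeProdGroup p q := PresentedGroup.of 1

/-- The element `g_n = (u^s v^r) ((u^s v^r)^q u^{-1})^n`. -/
def g (p q r s : ℤ) (n : ℕ) : FreeProdGroup p q :=
  (u p q ^ s * v p q ^ r) * ((u p q ^ s * v p q ^ r) ^ q * (u p q)⁻¹) ^ n

/-!
Send `H` to the free product `ℤ/p ∗ ℤ/q` built as `Monoid.CoprodI`, where reduced words are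
available. With `A = u^s v^r` and `B = u^(s-1) v^r`, the image of `g_n` is conjugate (by `A^q`)
to `A (B A^(q-1))^n`, a product of `1 + nq` syllable pairs `(uᵃ, vᵇ)` with nontrivial letters.
Such a word starts in `ℤ/p` and ends in `ℤ/q`, so it is cyclically reduced and its `k`-th power
has exactly `2k(1 + nq)` syllables. Since syllable length is subadditive, the growth rate of
`k ↦ ℓ(x^k)` is a conjugacy invariant, so `g_m` and `g_n` conjugate forces `m = n`.
-/

open Monoid.CoprodI

section TranslationLength

variable {G : Type*} [Group G] {ℓ : G → ℕ}

lemma le_of_forall_mul_le_mul_add {a b D : ℕ} (h : ∀ k : ℕ, k * a ≤ k * b + D) : a ≤ b := by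
  by_contra! hab
  nlinarith [h (D + 1)]

theorem le_of_isConj_of_length_pow (hℓ : ∀ x y, ℓ (x * y) ≤ ℓ x + ℓ y) {x y : G}
    (hxy : IsConj x y) {a b : ℕ} (hx : ∀ k : ℕ, ℓ (x ^ k) = k * a)
    (hy : ∀ k : ℕ, ℓ (y ^ k) = k * b) : a ≤ b := by
  obtain ⟨c, hc⟩ := isConj_iff.1 hxy
  refine le_of_forall_mul_le_mul_add (D := ℓ c⁻¹ + ℓ c) fun k => ?_
  have hxk : x ^ k = c⁻¹ * (y ^ k * c) := by rw [← hc, conj_pow]; group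
  calc k * a = ℓ (x ^ k) := (hx k).symm
    _ ≤ ℓ c⁻¹ + (ℓ (y ^ k) + ℓ c) := hxk ▸ (hℓ _ _).trans (Nat.add_le_add_left (hℓ _ _) _)
    _ = k * b + (ℓ c⁻¹ + ℓ c) := by rw [hy]; ring

theorem eq_of_isConj_of_length_pow (hℓ : ∀ x y, ℓ (x * y) ≤ ℓ x + ℓ y) {x y : G}
    (hxy : IsConj x y) {a b : ℕ} (hx : ∀ k : ℕ, ℓ (x ^ k) = k * a)
    (hy : ∀ k : ℕ, ℓ (y ^ k) = k * b) : a = b :=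
  le_antisymm (le_of_isConj_of_length_pow hℓ hxy hx hy)
    (le_of_isConj_of_length_pow hℓ hxy.symm hy hx)

end TranslationLength

lemma isConj_mul_mul_pow_of_commute {G : Type*} [Group G] {a b : G} (c : G) (hab : Commute a b)
    (j : ℕ) : IsConj (a * (b * c) ^ j) (a * (c * b) ^ j) := by
  refine isConj_iff.2 ⟨b⁻¹, ?_⟩
  have hcb : c * b = b⁻¹ * (b * c) * b⁻¹⁻¹ := by group
  rw [hcb, conj_pow, ← mul_assoc, ← hab.inv_right.eq]
  group

section SyllableLength

variable {ι : Type*} {M : ι → Type*} [∀ i, Monoid (M i)] [∀ i, DecidableEq (M i)]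

lemma length_tail_le_length_rcons {i : ι} (p : Word.Pair M i) :
    p.tail.toList.length ≤ (Word.rcons p).toList.length := by
  unfold Word.rcons; split_ifs <;> simp

lemma length_rcons_le_length_tail_add_one {i : ι} (p : Word.Pair M i) :
    (Word.rcons p).toList.length ≤ p.tail.toList.length + 1 := by
  unfold Word.rcons; split_ifs <;> simp

variable [DecidableEq ι]

noncomputable def syllableLength (x : Monoid.CoprodI M) : ℕ := (Word.equiv x).toList.length

lemma syllableLength_prod (w : Word M) : syllableLength w.prod = w.toList.length := by
  rw [syllableLength, show w.prod = Word.equiv.symm w from rfl, Equiv.apply_symm_apply]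

lemma length_equivPair_tail_le (i : ι) (w : Word M) :
    (Word.equivPair i w).tail.toList.length ≤ w.toList.length := by
  simpa [← Word.equivPair_symm] using length_tail_le_length_rcons (Word.equivPair i w)

lemma syllableLength_of_mul_le {i : ι} (m : M i) (x : Monoid.CoprodI M) :
    syllableLength (of m * x) ≤ syllableLength x + 1 := by
  have h : Word.equiv (of m * x) = of m • Word.equiv x := by
    show (of m * x) • (Word.empty : Word M) = of m • x • Word.empty
    exact mul_smul _ _ _
  rw [syllableLength, h, Word.of_smul_def]
  exact (length_rcons_le_length_tail_add_one _).trans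
    (Nat.add_le_add_right (length_equivPair_tail_le i _) 1)

lemma syllableLength_mul_le (x y : Monoid.CoprodI M) :
    syllableLength (x * y) ≤ syllableLength x + syllableLength y := by
  obtain ⟨w, rfl⟩ := Word.equiv.symm.surjective x
  change syllableLength (w.prod * y) ≤ syllableLength w.prod + _
  rw [syllableLength_prod]
  induction w using Word.consRecOn with
  | empty => simp
  | cons i m w hmw hm ih =>
    rw [Word.prod_cons, mul_assoc, Word.cons_toList, List.length_cons]
    exact (syllableLength_of_mul_le m _).trans (by omega)

end SyllableLength

section AlternatingProduct

variable {ι : Type*} {M : ι → Type*} [∀ i, Monoid (M i)]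

inductive IsAlternatingProduct (i j : ι) : ℕ → Monoid.CoprodI M → Prop
  | one : IsAlternatingProduct i j 0 1
  | cons {n : ℕ} {x : Monoid.CoprodI M} {a : M i} {b : M j} (ha : a ≠ 1) (hb : b ≠ 1)
      (hx : IsAlternatingProduct i j n x) : IsAlternatingProduct i j (n + 1) (of a * of b * x)

namespace IsAlternatingProduct

variable {i j : ι} {n m : ℕ} {x y : Monoid.CoprodI M}

lemma of_mul_of {a : M i} {b : M j} (ha : a ≠ 1) (hb : b ≠ 1) :
    IsAlternatingProduct i j 1 (of a * of b) := by
  simpa using cons ha hb one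

lemma mul (hx : IsAlternatingProduct i j n x) (hy : IsAlternatingProduct i j m y) :
    IsAlternatingProduct i j (n + m) (x * y) := by
  induction hx with
  | one => simpa using hy
  | cons ha hb _ ih => simpa [mul_assoc, add_right_comm] using cons ha hb ih

lemma pow (hx : IsAlternatingProduct i j n x) (k : ℕ) :
    IsAlternatingProduct i j (k * n) (x ^ k) := by
  induction k with
  | zero => simpa using one
  | succ k ih => simpa [pow_succ, add_mul] using ih.mul hx

lemma exists_word (hij : i ≠ j) (hx : IsAlternatingProduct i j n x) :
    ∃ w : Word M, w.prod = x ∧ w.toList.length = 2 * n ∧ w.fstIdx ≠ some j := by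
  induction hx with
  | one => exact ⟨Word.empty, rfl, rfl, by simp [Word.fstIdx]⟩
  | @cons n x a b ha hb _ ih =>
    obtain ⟨w, rfl, hlen, hw⟩ := ih
    have hbw : (Word.cons b w hw hb).fstIdx ≠ some i := by simpa using hij.symm
    exact ⟨Word.cons a _ hbw ha, by simp [mul_assoc], by simp [hlen]; ring, by simpa using hij⟩

variable [DecidableEq ι] [∀ i, DecidableEq (M i)]

lemma syllableLength_eq (hij : i ≠ j) (hx : IsAlternatingProduct i j n x) :
    syllableLength x = 2 * n := by
  obtain ⟨w, rfl, hlen, -⟩ := hx.exists_word hij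
  rw [syllableLength_prod, hlen]

end IsAlternatingProduct

end AlternatingProduct

namespace IsAlternatingProduct

variable {ι : Type*} [DecidableEq ι] {M : ι → Type*} [∀ i, Group (M i)] [∀ i, DecidableEq (M i)]

theorem eq_of_isConj {i j : ι} {n m : ℕ} {x y : Monoid.CoprodI M} (hij : i ≠ j)
    (hx : IsAlternatingProduct i j n x) (hy : IsAlternatingProduct i j m y) (hxy : IsConj x y) :
    n = m := by
  have h := eq_of_isConj_of_length_pow (a := 2 * n) (b := 2 * m) syllableLength_mul_le hxy
    (fun k => by rw [(hx.pow k).syllableLength_eq hij]; ring)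
    (fun k => by rw [(hy.pow k).syllableLength_eq hij]; ring)
  omega

end IsAlternatingProduct

abbrev CyclicFactor (p q : ℤ) (i : Fin 2) : Type := Multiplicative (ZMod (![p, q] i).natAbs)

namespace CyclicFactor

def gen (p q : ℤ) (i : Fin 2) : CyclicFactor p q i := Multiplicative.ofAdd 1

lemma gen_zpow_eq_one_iff (p q : ℤ) (i : Fin 2) (t : ℤ) :
    gen p q i ^ t = 1 ↔ ![p, q] i ∣ t := by
  rw [gen, ← ofAdd_zsmul, ofAdd_eq_one, zsmul_one, ZMod.intCast_zmod_eq_zero_iff_dvd,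
    Int.natAbs_dvd]

lemma gen_zpow_ne_one {p q : ℤ} {i : Fin 2} {t : ℤ} (ht : t ≠ 0) (hlt : |t| < ![p, q] i) :
    gen p q i ^ t ≠ 1 :=
  fun h => ht (Int.eq_zero_of_abs_lt_dvd ((gen_zpow_eq_one_iff p q i t).1 h) hlt)

end CyclicFactor

open CyclicFactor

def toCoprodI (p q : ℤ) : FreeProdGroup p q →* Monoid.CoprodI (CyclicFactor p q) :=
  PresentedGroup.toGroup (f := fun i => of (gen p q i)) <| by
    rintro w (rfl | rfl)
    · rw [map_zpow, FreeGroup.lift_apply_of, ← map_zpow, (gen_zpow_eq_one_iff p q 0 p).2 dvd_rfl,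
        map_one]
    · rw [map_zpow, FreeGroup.lift_apply_of, ← map_zpow, (gen_zpow_eq_one_iff p q 1 q).2 dvd_rfl,
        map_one]

lemma toCoprodI_u (p q : ℤ) : toCoprodI p q (u p q) = of (gen p q 0) :=
  PresentedGroup.toGroup.of _

lemma toCoprodI_v (p q : ℤ) : toCoprodI p q (v p q) = of (gen p q 1) :=
  PresentedGroup.toGroup.of _

def genPair (p q a b : ℤ) : Monoid.CoprodI (CyclicFactor p q) :=
  of (gen p q 0 ^ a) * of (gen p q 1 ^ b)

lemma isConj_toCoprodI_g (p q r s : ℤ) {Q : ℕ} (hQ : q = (Q + 1 : ℕ)) (j : ℕ) :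
    IsConj (toCoprodI p q (g p q r s j))
      (genPair p q s r * (genPair p q (s - 1) r * genPair p q s r ^ Q) ^ j) := by
  set X := of (gen p q 0)
  set A := genPair p q s r
  have hg : toCoprodI p q (g p q r s j) = A * (A ^ (Q + 1) * X⁻¹) ^ j := by
    simp only [g, A, X, genPair, hQ, map_mul, map_pow, map_zpow, map_inv, toCoprodI_u,
      toCoprodI_v, zpow_natCast]
  have hB : X⁻¹ * A ^ (Q + 1) = genPair p q (s - 1) r * A ^ Q := by
    rw [pow_succ', ← mul_assoc]
    simp only [A, X, genPair, map_zpow, map_mul, map_inv, sub_eq_neg_add, zpow_add, zpow_neg_one, mul_assoc]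
  rw [hg, ← hB]
  exact isConj_mul_mul_pow_of_commute _ (Commute.self_pow A _) j

theorem g_not_conjugate_general (p q r s : ℤ) (hq : 2 ≤ q)
    (hrs : r * p + s * q = 1) (hr : |r| < q) (hs1 : 1 < s) (hs2 : s < p)
    (m n : ℕ) (hmn : m ≠ n) :
    ¬ IsConj (g p q r s m) (g p q r s n) := by
  intro hconj
  obtain ⟨Q, hQ⟩ : ∃ Q : ℕ, q = (Q + 1 : ℕ) := ⟨(q - 1).toNat, by omega⟩
  have hr0 : r ≠ 0 := by rintro rfl; nlinarith
  have hus : gen p q 0 ^ s ≠ 1 :=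
    gen_zpow_ne_one (by omega) (by rw [abs_of_pos (by omega)]; exact hs2)
  have hus' : gen p q 0 ^ (s - 1) ≠ 1 :=
    gen_zpow_ne_one (by omega) (by rw [abs_of_pos (by omega)]; exact (sub_one_lt s).trans hs2)
  have hvr : gen p q 1 ^ r ≠ 1 := gen_zpow_ne_one hr0 hr
  have hA : IsAlternatingProduct 0 1 1 (genPair p q s r) := .of_mul_of hus hvr
  have hB : IsAlternatingProduct 0 1 1 (genPair p q (s - 1) r) := .of_mul_of hus' hvr
  have halt (j : ℕ) : IsAlternatingProduct 0 1 (1 + j * (1 + Q * 1))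
      (genPair p q s r * (genPair p q (s - 1) r * genPair p q s r ^ Q) ^ j) :=
    hA.mul ((hB.mul (hA.pow Q)).pow j)
  have hlen := (halt m).eq_of_isConj (by decide) (halt n)
    (((isConj_toCoprodI_g p q r s hQ m).symm.trans ((toCoprodI p q).map_isConj hconj)).trans
      (isConj_toCoprodI_g p q r s hQ n))
  exact hmn (by simpa using hlen)

theorem g_not_conjugate (p q r s : ℤ) (hpq : q < p) (hq : 2 ≤ q)
    (hrs : r * p + s * q = 1) (hr : |r| < q) (hs1 : 1 < s) (hs2 : s < p)
    (m n : ℕ) (hmn : m ≠ n) :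
    ¬ IsConj (g p q r s m) (g p q r s n) :=
  g_not_conjugate_general p q r s hq hrs hr hs1 hs2 m n hmn
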